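/- arXiv:2106.14752 — 3 statements merged into one kernel-verified Lean document; each statement's English description precedes it below -/
import Mathlib

section
/- Let (Q,ρ,[·,·]) be a skew-symmetric dull algebroid in algebraic form over a commutative unital ℝ-algebra R and let ∇ be a linear connection on Q. Then the anchor maps the basic curvature to the curvature of the basic connection on derivations: ρ(R^{bas}_∇(q₁,q₂)X) = ∇^{bas,𝔛}_{q₁}∇^{bas,𝔛}_{q₂}X − ∇^{bas,𝔛}_{q₂}∇^{bas,𝔛}_{q₁}X − ∇^{bas,𝔛}_{[q₁,q₂]}X for all q₁,q₂ ∈ Q and X ∈ 𝔛(R). -/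
/-
STATEMENT 6: For a skew-symmetric dull algebroid (Q, ρ, [·,·]) in algebraic form over a
commutative unital ℝ-algebra R with a linear connection ∇ on Q, the anchor maps the basic
curvature to the curvature of the basic connection on derivations.
-/

section

variable {R : Type*} [CommRing R] [Algebra ℝ R]
variable {Q : Type*} [AddCommGroup Q] [Module R Q] [Module ℝ Q] [IsScalarTower ℝ R Q]

/-- The basic connection on `𝔛(R)`: `∇^{bas,𝔛}_{q} X := ⁅ρ(q), X⁆ + ρ(∇_X q)`. -/
def basX (ρ : Q →ₗ[R] Derivation ℝ R R)
    (nab : Derivation ℝ R R → Q → Q) (q : Q) (X : Derivation ℝ R R) : Derivation ℝ R R :=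
  ⁅ρ q, X⁆ + ρ (nab X q)

/-- The basic curvature:
`R^{bas}_∇(q₁,q₂)X := −∇_X[q₁,q₂] + [q₁,∇_X q₂] + [∇_X q₁,q₂] + ∇_{∇^{bas,𝔛}_{q₂}X}q₁
  − ∇_{∇^{bas,𝔛}_{q₁}X}q₂`. -/
def Rbas (br : Q → Q → Q) (ρ : Q →ₗ[R] Derivation ℝ R R)
    (nab : Derivation ℝ R R → Q → Q) (q₁ q₂ : Q) (X : Derivation ℝ R R) : Q :=
  - nab X (br q₁ q₂) + br q₁ (nab X q₂) + br (nab X q₁) q₂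
    + nab (basX ρ nab q₂ X) q₁ - nab (basX ρ nab q₁ X) q₂

theorem stmt6
    (br : Q → Q → Q) (ρ : Q →ₗ[R] Derivation ℝ R R)
    (hbr_addl : ∀ q₁ q₂ q₃ : Q, br (q₁ + q₂) q₃ = br q₁ q₃ + br q₂ q₃)
    (hbr_addr : ∀ q₁ q₂ q₃ : Q, br q₁ (q₂ + q₃) = br q₁ q₂ + br q₁ q₃)
    (hbr_smull : ∀ (r : ℝ) (q₁ q₂ : Q), br (r • q₁) q₂ = r • br q₁ q₂)
    (hbr_smulr : ∀ (r : ℝ) (q₁ q₂ : Q), br q₁ (r • q₂) = r • br q₁ q₂)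
    (hskew : ∀ q₁ q₂ : Q, br q₁ q₂ = - br q₂ q₁)
    (hanchor : ∀ q₁ q₂ : Q, ρ (br q₁ q₂) = ⁅ρ q₁, ρ q₂⁆)
    (hleib : ∀ (f : R) (q₁ q₂ : Q), br q₁ (f • q₂) = f • br q₁ q₂ + ρ q₁ f • q₂)
    (nab : Derivation ℝ R R → Q → Q)
    (hnab_addX : ∀ (X Y : Derivation ℝ R R) (q : Q), nab (X + Y) q = nab X q + nab Y q)
    (hnab_addq : ∀ (X : Derivation ℝ R R) (q₁ q₂ : Q), nab X (q₁ + q₂) = nab X q₁ + nab X q₂)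
    (hnab_smulX : ∀ (f : R) (X : Derivation ℝ R R) (q : Q), nab (f • X) q = f • nab X q)
    (hnab_leib : ∀ (X : Derivation ℝ R R) (f : R) (q : Q),
      nab X (f • q) = X f • q + f • nab X q) :
    ∀ (q₁ q₂ : Q) (X : Derivation ℝ R R),
      ρ (Rbas br ρ nab q₁ q₂ X) =
        basX ρ nab q₁ (basX ρ nab q₂ X) - basX ρ nab q₂ (basX ρ nab q₁ X)
          - basX ρ nab (br q₁ q₂) X := by
  intro q₁ q₂ X
  simp only [Rbas, basX, map_add, map_sub, map_neg, hanchor, lie_add, add_lie, lie_lie]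
  rw [show ⁅ρ (nab X q₁), ρ q₂⁆ = -⁅ρ q₂, ρ (nab X q₁)⁆ from (lie_skew _ _).symm]
  abel

end
end

section
/- Let A be a ℤ-graded, graded-commutative, associative, unital ℝ-algebra with a homological vector field Q, let k ∈ ℤ, and let ξ ∈ A_k satisfy Q(ξ) = 0. For each i ∈ ℤ define D^i : A_i × A_{i−k+1} → A_{i+1} × A_{i−k+2} by D^i(ζ₁,ζ₂) := (Q(ζ₁) + (−1)^{i−k+1}ζ₂ξ, Q(ζ₂)). Then D^{i+1}∘D^i = 0 for every i ∈ ℤ; that is, the spaces A_i × A_{i−k+1} with the operators D^i form a cochain complex (the representation up to homotopy associated to the Q-closed function ξ). -/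
/-
STATEMENT 12: Let A be a ℤ-graded, graded-commutative, associative, unital ℝ-algebra with a
homological vector field Q and let ξ ∈ A_k satisfy Q(ξ) = 0.  The operators
D^i : A_i × A_{i−k+1} → A_{i+1} × A_{i−k+2}, D^i(ζ₁,ζ₂) := (Q(ζ₁) + (−1)^{i−k+1}ζ₂ξ, Q(ζ₂)),
satisfy D^{i+1} ∘ D^i = 0, i.e. they form a cochain complex.
-/

section

variable {A : Type*} [Ring A] [Algebra ℝ A]

/-- The sign `(-1)^k` for `k : ℤ`. -/
noncomputable def gsgn (k : ℤ) : ℝ := (-1 : ℝ) ^ k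

/-- `X` is a vector field of degree `j` on the graded algebra `(A, 𝒜)`. -/
def IsHomVF (𝒜 : ℤ → Submodule ℝ A) (j : ℤ) (X : A →ₗ[ℝ] A) : Prop :=
  (∀ i : ℤ, ∀ x ∈ 𝒜 i, X x ∈ 𝒜 (i + j)) ∧
  (∀ i : ℤ, ∀ x ∈ 𝒜 i, ∀ z : A, X (x * z) = X x * z + gsgn (j * i) • (x * X z))

theorem stmt12 (𝒜 : ℤ → Submodule ℝ A) [GradedRing 𝒜]
    (hcomm : ∀ (i j : ℤ) (x y : A), x ∈ 𝒜 i → y ∈ 𝒜 j → x * y = gsgn (i * j) • (y * x))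
    (Q : A →ₗ[ℝ] A) (hQ : IsHomVF 𝒜 1 Q) (hQ2 : Q ∘ₗ Q = 0)
    (k : ℤ) (ξ : A) (hξ : ξ ∈ 𝒜 k) (hQξ : Q ξ = 0)
    (D : ℤ → A × A → A × A)
    (hD : ∀ (i : ℤ) (p : A × A), D i p = (Q p.1 + gsgn (i - k + 1) • (p.2 * ξ), Q p.2)) :
    ∀ (i : ℤ) (p : A × A), p.1 ∈ 𝒜 i → p.2 ∈ 𝒜 (i - k + 1) →
      (D i p).1 ∈ 𝒜 (i + 1) ∧ (D i p).2 ∈ 𝒜 (i + 1 - k + 1) ∧ D (i + 1) (D i p) = 0 := by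

  intro i p h1 h2
  obtain ⟨hQmem, hQmul⟩ := hQ
  have hQQ : ∀ x : A, Q (Q x) = 0 := fun x => congrFun (congrArg DFunLike.coe hQ2) x
  refine ⟨?_, ?_, ?_⟩
  · rw [hD]
    exact Submodule.add_mem _ (by simpa using hQmem i p.1 h1)
      (Submodule.smul_mem _ _ (by
        have := SetLike.mul_mem_graded h2 hξ
        simpa [show i - k + 1 + k = i + 1 by ring] using this))
  · rw [hD]
    have := hQmem _ p.2 h2
    simpa [show i - k + 1 + 1 = i + 1 - k + 1 by ring] using this
  · rw [hD, hD]
    have hQp2ξ : Q (p.2 * ξ) = Q p.2 * ξ := by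
      rw [hQmul _ p.2 h2 ξ, hQξ, mul_zero, smul_zero, add_zero]
    have hsgn : gsgn (i + 1 - k + 1) = -gsgn (i - k + 1) := by
      have : i + 1 - k + 1 = (i - k + 1) + 1 := by ring
      rw [this, gsgn, gsgn, zpow_add₀ (by norm_num : (-1:ℝ) ≠ 0)]
      simp
    simp only [map_add, map_smul, hQQ, hQp2ξ, hsgn, Prod.ext_iff]
    constructor
    · simp only [zero_add, neg_smul]
      ring_nf
      simp [smul_smul]
    · simp [hQQ]


end
end

section
/- Let A be a ℤ-graded, graded-commutative, associative, unital ℝ-algebra with a homological vector field Q, let k ∈ ℤ, and let ξ, ξ′ ∈ A_k satisfy Q(ξ) = 0 = Q(ξ′) and ξ − ξ′ = Q(ξ″) for some ξ″ ∈ A_{k−1}. Let D_ξ and D_{ξ′} denote the operators on A_i × A_{i−k+1} given by D^i(ζ₁,ζ₂) := (Q(ζ₁) + (−1)^{i−k+1}ζ₂ξ, Q(ζ₂)), respectively the same formula with ξ′ in place of ξ. Then the maps μ^i : A_i × A_{i−k+1} → A_i × A_{i−k+1}, μ^i(ζ₁,ζ₂) := (ζ₁ + ζ₂ξ″, ζ₂),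 are ℝ-linear bijections satisfying μ^{i+1}∘D_ξ^i = D_{ξ′}^i∘μ^i for all i ∈ ℤ; hence the cochain complexes determined by ξ and by ξ′ are isomorphic. -/
/-
STATEMENT 13: Let A be a ℤ-graded, graded-commutative, associative, unital ℝ-algebra with a
homological vector field Q, and let ξ, ξ′ ∈ A_k be Q-closed with ξ − ξ′ = Q(ξ″) for some
ξ″ ∈ A_{k−1}.  Then the maps μ^i(ζ₁,ζ₂) := (ζ₁ + ζ₂ξ″, ζ₂) are ℝ-linear bijections of
A_i × A_{i−k+1} intertwining the differentials D_ξ and D_{ξ′}; hence the associated cochain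
complexes are isomorphic.
-/

section

variable {A : Type*} [Ring A] [Algebra ℝ A]

theorem stmt13 (𝒜 : ℤ → Submodule ℝ A) [GradedRing 𝒜]
    (hcomm : ∀ (i j : ℤ) (x y : A), x ∈ 𝒜 i → y ∈ 𝒜 j → x * y = gsgn (i * j) • (y * x))
    (Q : A →ₗ[ℝ] A) (hQ : IsHomVF 𝒜 1 Q) (hQ2 : Q ∘ₗ Q = 0)
    (k : ℤ) (ξ ξ' : A) (hξ : ξ ∈ 𝒜 k) (hξ' : ξ' ∈ 𝒜 k)
    (hQξ : Q ξ = 0) (hQξ' : Q ξ' = 0)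
    (ξ'' : A) (hξ'' : ξ'' ∈ 𝒜 (k - 1)) (hdiff : ξ - ξ' = Q ξ'')
    (D D' : ℤ → A × A → A × A)
    (hD : ∀ (i : ℤ) (p : A × A), D i p = (Q p.1 + gsgn (i - k + 1) • (p.2 * ξ), Q p.2))
    (hD' : ∀ (i : ℤ) (p : A × A), D' i p = (Q p.1 + gsgn (i - k + 1) • (p.2 * ξ'), Q p.2))
    (μ : ℤ → A × A → A × A)
    (hμ : ∀ (i : ℤ) (p : A × A), μ i p = (p.1 + p.2 * ξ'', p.2)) :
    (∀ i : ℤ, IsLinearMap ℝ (μ i)) ∧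
    (∀ i : ℤ, Set.BijOn (μ i) {p : A × A | p.1 ∈ 𝒜 i ∧ p.2 ∈ 𝒜 (i - k + 1)}
      {p : A × A | p.1 ∈ 𝒜 i ∧ p.2 ∈ 𝒜 (i - k + 1)}) ∧
    (∀ (i : ℤ) (p : A × A), p.1 ∈ 𝒜 i → p.2 ∈ 𝒜 (i - k + 1) →
      μ (i + 1) (D i p) = D' i (μ i p)) := by
  refine ⟨?_, ?_, ?_⟩
  · intro i
    constructor
    · intro p q
      simp only [hμ, Prod.fst_add, Prod.snd_add, add_mul, Prod.mk_add_mk]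
      ext <;> simp <;> abel
    · intro c p
      simp only [hμ, Prod.smul_fst, Prod.smul_snd, smul_mul_assoc, Prod.smul_mk, smul_add]
  · intro i
    have hmem : ∀ z ∈ 𝒜 (i - k + 1), z * ξ'' ∈ 𝒜 i := by
      intro z hz
      have := SetLike.mul_mem_graded hz hξ''
      convert this using 2
      ring
    refine ⟨?_, ?_, ?_⟩
    · intro p hp
      simp only [hμ, Set.mem_setOf_eq] at *
      exact ⟨(𝒜 i).add_mem hp.1 (hmem _ hp.2), hp.2⟩
    · intro p hp q hq h
      simp only [hμ, Prod.mk.injEq] at h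
      obtain ⟨h1, h2⟩ := h
      have : p.1 = q.1 := by rw [h2] at h1; exact add_right_cancel h1
      exact Prod.ext this h2
    · intro q hq
      refine ⟨(q.1 - q.2 * ξ'', q.2), ⟨?_, hq.2⟩, ?_⟩
      · exact (𝒜 i).sub_mem hq.1 (hmem _ hq.2)
      · simp [hμ]
  · intro i p hp1 hp2
    have hleib := hQ.2 (i - k + 1) p.2 hp2 ξ''
    have hsgn : gsgn (1 * (i - k + 1)) = gsgn (i - k + 1) := by rw [one_mul]
    simp only [hD, hD', hμ, map_add]
    ext
    · simp only
      rw [hleib, hsgn, ← hdiff]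
      simp only [smul_sub, mul_sub, smul_add, smul_sub]
      abel
    · simp


end
end
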